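/- arXiv:2212.13719 — 3 statements merged into one kernel-verified Lean document; each statement's English description precedes it below -/
import Mathlib

section
/- Let r and s be integers with 2 ≤ r ≤ s such that r divides s, let k = s/r, and let n be a positive integer divisible by k. Then ν(n, P^{(r)}_s) = τ*(n, P^{(r)}_s) = C(n/k, r), where C(n/k, r) is the binomial coefficient. -/
open Finset
open scoped Classical

/-- Edge set of the natural tight path `P^{(r)}_s` on vertex set `[s] = {1,…,s}`:
all intervals of `r` consecutive integers. -/
def pathEdges (r s : ℕ) : Finset (Finset ℕ) :=
  (Finset.Icc 1 (s - r + 1)).image (fun i => Finset.Icc i (i + r - 1))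

/-- Edge set of the loose path `LP^{(r)}_s`: only the first and last edges. -/
def loosePathEdges (r s : ℕ) : Finset (Finset ℕ) :=
  {Finset.Icc 1 r, Finset.Icc (s - r + 1) s}

/-- `C` is the edge set of a copy in `K^{(r)}_n` of the ordered hypergraph with
vertex set `[s]` and edge set `E`, i.e. the image of `E` under a strictly
increasing map `[s] → [n]`. -/
def IsCopy (n s : ℕ) (E : Finset (Finset ℕ)) (C : Finset (Finset ℕ)) : Prop :=
  ∃ f : ℕ → ℕ, StrictMonoOn f ↑(Finset.Icc 1 s) ∧
    (∀ v ∈ Finset.Icc 1 s, f v ∈ Finset.Icc 1 n) ∧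
    C = E.image (fun e => e.image f)

/-- A transversal: a set `T` of `r`-element subsets of `[n]` meeting every copy. -/
def IsTransversal (n r s : ℕ) (E : Finset (Finset ℕ)) (T : Finset (Finset ℕ)) : Prop :=
  T ⊆ (Finset.Icc 1 n).powersetCard r ∧
  ∀ C : Finset (Finset ℕ), IsCopy n s E C → ∃ e ∈ C, e ∈ T

/-- The transversal number `τ(n,H)`. -/
noncomputable def tau (n r s : ℕ) (E : Finset (Finset ℕ)) : ℕ :=
  sInf {m | ∃ T : Finset (Finset ℕ), IsTransversal n r s E T ∧ T.card = m}

/-- A packing: an edge-disjoint family of copies. -/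
def IsPacking (n s : ℕ) (E : Finset (Finset ℕ)) (P : Finset (Finset (Finset ℕ))) : Prop :=
  (∀ C ∈ P, IsCopy n s E C) ∧
  ∀ C ∈ P, ∀ C' ∈ P, C ≠ C' → Disjoint C C'

/-- The packing number `ν(n,H)`. -/
noncomputable def nu (n s : ℕ) (E : Finset (Finset ℕ)) : ℕ :=
  sSup {m | ∃ P : Finset (Finset (Finset ℕ)), IsPacking n s E P ∧ P.card = m}

/-- The ordered Turán number: maximum number of edges of a subgraph of
`K^{(r)}_n` containing no copy of the hypergraph with edge set `E`. -/
noncomputable def exNum (n r s : ℕ) (E : Finset (Finset ℕ)) : ℕ :=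
  sSup {m | ∃ G ⊆ (Finset.Icc 1 n).powersetCard r,
    (∀ C : Finset (Finset ℕ), IsCopy n s E C → ¬ C ⊆ G) ∧ G.card = m}

/-- `S ⊆ [n]` is `m`-left-biased. -/
def LeftBiased (n m : ℕ) (S : Finset ℕ) : Prop :=
  ∃ u ≤ n / 2, (S ∩ Finset.Icc 1 u).card = m ∧ S ∩ Finset.Icc (n + 1 - u) n = ∅

/-- `h(n,t,m)`: the number of `m`-left-biased `t`-element subsets of `[n]`. -/
noncomputable def hcount (n t m : ℕ) : ℕ :=
  (((Finset.Icc 1 n).powersetCard t).filter (LeftBiased n m)).card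

/-- A fractional transversal. -/
def IsFracTransversal (n r s : ℕ) (E : Finset (Finset ℕ)) (w : Finset ℕ → ℝ) : Prop :=
  (∀ e ∈ (Finset.Icc 1 n).powersetCard r, 0 ≤ w e) ∧
  ∀ C : Finset (Finset ℕ), IsCopy n s E C → 1 ≤ ∑ e ∈ C, w e

/-- The fractional transversal number `τ*(n,H)`. -/
noncomputable def tauStar (n r s : ℕ) (E : Finset (Finset ℕ)) : ℝ :=
  sInf {x : ℝ | ∃ w : Finset ℕ → ℝ, IsFracTransversal n r s E w ∧
    x = ∑ e ∈ (Finset.Icc 1 n).powersetCard r, w e}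

/-- A `k`-edge-labeling of the ordered complete graph on `[n]`. -/
def IsLabeling (n k : ℕ) (φ : ℕ → ℕ → ℕ) : Prop :=
  ∀ u v : ℕ, u ∈ Finset.Icc 1 n → v ∈ Finset.Icc 1 n → u < v → φ u v ∈ Finset.Icc 1 k

/-- The number of good triples `u < v < w` in `[n]` (those with `φ(uv) < φ(vw)`). -/
def goodCount (n : ℕ) (φ : ℕ → ℕ → ℕ) : ℕ :=
  (((Finset.Icc 1 n) ×ˢ (Finset.Icc 1 n) ×ˢ (Finset.Icc 1 n)).filter
    (fun p => p.1 < p.2.1 ∧ p.2.1 < p.2.2 ∧ φ p.1 p.2.1 < φ p.2.1 p.2.2)).card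

/-- The number of bad triples `u < v < w` in `[n]` (those with `φ(uv) ≥ φ(vw)`). -/
def badCount (n : ℕ) (φ : ℕ → ℕ → ℕ) : ℕ :=
  (((Finset.Icc 1 n) ×ˢ (Finset.Icc 1 n) ×ˢ (Finset.Icc 1 n)).filter
    (fun p => p.1 < p.2.1 ∧ p.2.1 < p.2.2 ∧ ¬ φ p.1 p.2.1 < φ p.2.1 p.2.2)).card

/-- `f(n,k)`: the maximum number of good triples over all `k`-edge-labelings of `[n]`. -/
noncomputable def fmax (n k : ℕ) : ℕ :=
  sSup {m | ∃ φ : ℕ → ℕ → ℕ, IsLabeling n k φ ∧ goodCount n φ = m}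

/-- A labeling is monotone if `φ(uv) ≤ φ(vw)` whenever `u < v < w` in `[n]`. -/
def IsMonotone (n : ℕ) (φ : ℕ → ℕ → ℕ) : Prop :=
  ∀ u v w : ℕ, u ∈ Finset.Icc 1 n → v ∈ Finset.Icc 1 n → w ∈ Finset.Icc 1 n →
    u < v → v < w → φ u v ≤ φ v w

/-- `Φ_L(v) = max{φ(uv) : u < v}`, with `Φ_L(1) = 0`. -/
def PhiL (φ : ℕ → ℕ → ℕ) (v : ℕ) : ℕ := (Finset.Ico 1 v).sup (fun u => φ u v)

/-- `Φ_R(v) = min{φ(vw) : v < w ≤ n}`, with `Φ_R(n) = k+1`. -/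
noncomputable def PhiR (n k : ℕ) (φ : ℕ → ℕ → ℕ) (v : ℕ) : ℕ :=
  if v = n then k + 1 else sInf {m | ∃ w ∈ Finset.Ioc v n, φ v w = m}

/-- `X_i = {v ∈ [n] : Φ_L(v) = i}`. -/
def XL (n : ℕ) (φ : ℕ → ℕ → ℕ) (i : ℕ) : Finset ℕ :=
  (Finset.Icc 1 n).filter (fun v => PhiL φ v = i)

/-- `X̂_i = {v ∈ [n] : Φ_R(v) = i}`. -/
noncomputable def XR (n k : ℕ) (φ : ℕ → ℕ → ℕ) (i : ℕ) : Finset ℕ :=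
  (Finset.Icc 1 n).filter (fun v => PhiR n k φ v = i)

/-!
Write `s = k r` and `n = k m`; both numbers equal `C(m, r)`.

Packing: for each `r`-subset `A` of `[m]` take the copy of the path whose vertex sequence runs
through `A, A + m, …, A + (k - 1) m`. Every edge of it is a window of `r` consecutive vertices,
so its residues modulo `m` are exactly `A`; hence these `C(m, r)` copies are edge-disjoint.

Fractional transversal: weight `1 / k` on every `r`-set inside one of the `k` blocks
`[q m + 1, q m + m]`, of total weight `k C(m, r) / k`. The block index along a copy is a monotone
sequence with values in `[0, k)`, so it jumps at most `k - 1` times, and each jump is inside at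
most `r - 1` of the `(k - 1) r + 1` edges; at least `k` edges therefore lie inside a block.

Weak LP duality (a packing is never larger than a fractional transversal) closes the gap.
-/

section Duality

variable {n r s : ℕ} {E : Finset (Finset ℕ)}

theorem IsPacking.card_le_sum_of_isFracTransversal
    (hE : ∀ C, IsCopy n s E C → C ⊆ (Icc 1 n).powersetCard r)
    {P : Finset (Finset (Finset ℕ))} (hP : IsPacking n s E P)
    {w : Finset ℕ → ℝ} (hw : IsFracTransversal n r s E w) :
    (#P : ℝ) ≤ ∑ e ∈ (Icc 1 n).powersetCard r, w e :=
  calc (#P : ℝ) = ∑ _C ∈ P, (1 : ℝ) := by simp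
    _ ≤ ∑ C ∈ P, ∑ e ∈ C, w e := sum_le_sum fun C hC => hw.2 C (hP.1 C hC)
    _ = ∑ e ∈ P.biUnion id, w e := (sum_biUnion fun C hC C' hC' => hP.2 C hC C' hC').symm
    _ ≤ ∑ e ∈ (Icc 1 n).powersetCard r, w e :=
      sum_le_sum_of_subset_of_nonneg (biUnion_subset.2 fun C hC => hE C (hP.1 C hC))
        fun e he _ => hw.1 e he

theorem nu_eq_and_tauStar_eq_of_card_eq_sum
    (hE : ∀ C, IsCopy n s E C → C ⊆ (Icc 1 n).powersetCard r)
    {P : Finset (Finset (Finset ℕ))} (hP : IsPacking n s E P)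
    {w : Finset ℕ → ℝ} (hw : IsFracTransversal n r s E w)
    (hPw : (#P : ℝ) = ∑ e ∈ (Icc 1 n).powersetCard r, w e) :
    nu n s E = #P ∧ tauStar n r s E = #P := by
  constructor
  · refine IsGreatest.csSup_eq ⟨⟨P, hP, rfl⟩, ?_⟩
    rintro _ ⟨P', hP', rfl⟩
    exact_mod_cast (hP'.card_le_sum_of_isFracTransversal hE hw).trans hPw.ge
  · refine IsLeast.csInf_eq ⟨⟨w, hw, hPw⟩, ?_⟩
    rintro _ ⟨w', hw', rfl⟩
    exact hP.card_le_sum_of_isFracTransversal hE hw'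

end Duality

theorem IsCopy.subset_powersetCard_pathEdges {n r s : ℕ} {C : Finset (Finset ℕ)} (hrs : r ≤ s)
    (hC : IsCopy n s (pathEdges r s) C) : C ⊆ (Icc 1 n).powersetCard r := by
  obtain ⟨f, hf, hfn, rfl⟩ := hC
  intro e he
  simp only [pathEdges, mem_image] at he
  obtain ⟨_, ⟨i, hi, rfl⟩, rfl⟩ := he
  have hsub : Icc i (i + r - 1) ⊆ Icc 1 s := fun x hx => by
    simp only [mem_Icc] at hi hx ⊢; omega
  refine mem_powersetCard.2 ⟨image_subset_iff.2 fun x hx => hfn x (hsub hx), ?_⟩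
  rw [card_image_of_injOn (hf.injOn.mono (coe_subset.2 hsub)), Nat.card_Icc]
  simp only [mem_Icc] at hi
  omega

theorem le_card_filter_eq_add_mul {B : ℕ → ℕ} {L d c : ℕ}
    (hB : MonotoneOn B (Set.Iio (L + d))) (hc : ∀ i < L + d, B i ≤ c) :
    L ≤ #{i ∈ range L | B i = B (i + d)} + d * c := by
  -- Every window with `B i ≠ B (i + d)` adds at least `1` to `∑ i < L, (B (i + d) - B i)`,
  -- which telescopes to `∑ i < d, (B (L + i) - B i) ≤ d * c`.
  have hstep : ∀ i ∈ range L, B i + (if ¬B i = B (i + d) then 1 else 0) ≤ B (i + d) := by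
    intro i hi
    have hi : i < L := mem_range.1 hi
    have := hB (show i < L + d by omega) (show i + d < L + d by omega) (Nat.le_add_right i d)
    split_ifs <;> omega
  have hsum := sum_le_sum hstep
  rw [sum_add_distrib, ← card_filter] at hsum
  have hsplit := card_filter_add_card_filter_not (s := range L) (fun i => B i = B (i + d))
  have htel₁ := sum_range_add B L d
  have htel₂ : ∑ i ∈ range (L + d), B i = ∑ i ∈ range d, B i + ∑ i ∈ range L, B (i + d) := by
    rw [add_comm L d, sum_range_add]
    simp only [add_comm d]
  have htail : ∑ i ∈ range d, B (L + i) ≤ d * c := by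
    simpa using sum_le_card_nsmul (range d) (fun i => B (L + i)) c
      fun i hi => hc _ (by rw [mem_range] at hi; omega)
  simp only [card_range] at hsplit
  omega

theorem mem_Icc_block_iff {m q x : ℕ} (hm : 0 < m) :
    x ∈ Icc (q * m + 1) (q * m + m) ↔ 0 < x ∧ (x - 1) / m = q := by
  rw [mem_Icc, Nat.div_eq_iff hm]
  omega

def blockEdges (r k m : ℕ) : Finset (Finset ℕ) :=
  (range k).biUnion fun q => (Icc (q * m + 1) (q * m + m)).powersetCard r

theorem blockEdges_subset (r k m : ℕ) : blockEdges r k m ⊆ (Icc 1 (k * m)).powersetCard r := by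
  refine biUnion_subset.2 fun q hq => powersetCard_mono fun x hx => ?_
  have : q * m + m ≤ k * m := by
    rw [← add_one_mul]; exact Nat.mul_le_mul_right m (mem_range.1 hq)
  simp only [mem_Icc] at hx ⊢
  omega

theorem card_blockEdges {r : ℕ} (hr : r ≠ 0) (k m : ℕ) : #(blockEdges r k m) = k * m.choose r := by
  rw [blockEdges, card_biUnion]
  · simp
  · intro q _ q' _ hqq'
    refine disjoint_left.2 fun e he he' => ?_
    rw [mem_powersetCard] at he he'
    obtain ⟨x, hx⟩ := card_pos.1 (he.2 ▸ Nat.pos_of_ne_zero hr)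
    rcases Nat.eq_zero_or_pos m with rfl | hm
    · simpa using he.1 hx
    exact hqq' (((mem_Icc_block_iff hm).1 (he.1 hx)).2.symm.trans
      ((mem_Icc_block_iff hm).1 (he'.1 hx)).2)

noncomputable def blockWeight (r k m : ℕ) (e : Finset ℕ) : ℝ :=
  if e ∈ blockEdges r k m then (k : ℝ)⁻¹ else 0

theorem sum_blockWeight (r k m : ℕ) (S : Finset (Finset ℕ)) :
    ∑ e ∈ S, blockWeight r k m e = #(S ∩ blockEdges r k m) / k := by
  simp only [blockWeight]
  rw [sum_ite_mem, sum_const, nsmul_eq_mul, div_eq_mul_inv]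

theorem sum_blockWeight_powersetCard {r k : ℕ} (hr : r ≠ 0) (hk : k ≠ 0) (m : ℕ) :
    ∑ e ∈ (Icc 1 (k * m)).powersetCard r, blockWeight r k m e = m.choose r := by
  rw [sum_blockWeight, inter_eq_right.2 (blockEdges_subset r k m), card_blockEdges hr]
  push_cast
  field_simp

theorem mem_blockEdges_of_forall {r k m q : ℕ} (hm : 0 < m) (hq : q < k) {e : Finset ℕ}
    (he : #e = r) (hblock : ∀ x ∈ e, 0 < x ∧ (x - 1) / m = q) : e ∈ blockEdges r k m :=
  mem_biUnion.2 ⟨q, mem_range.2 hq,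
    mem_powersetCard.2 ⟨fun x hx => (mem_Icc_block_iff hm).2 (hblock x hx), he⟩⟩

theorem StrictMonoOn.injOn_image_Icc {f : ℕ → ℕ} {r s : ℕ} (hf : StrictMonoOn f ↑(Icc 1 s))
    (hr : 0 < r) (hrs : r ≤ s) :
    Set.InjOn (fun i => (Icc (i + 1) (i + r)).image f) (Set.Iio (s - r + 1)) := by
  intro i hi j hj hij
  simp only [Set.mem_Iio] at hi hj
  have hwindow : ∀ i < s - r + 1, Icc (i + 1) (i + r) ⊆ Icc 1 s := fun i hi x hx => by
    simp only [mem_Icc] at hx ⊢; omega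
  have hIcc := (image_eq_image_iff_of_injOn hf.injOn (hwindow i hi) (hwindow j hj)).1 hij
  have hi' : i + 1 ∈ Icc (j + 1) (j + r) := hIcc ▸ mem_Icc.2 ⟨le_rfl, by omega⟩
  have hj' : j + 1 ∈ Icc (i + 1) (i + r) := hIcc ▸ mem_Icc.2 ⟨le_rfl, by omega⟩
  rw [mem_Icc] at hi' hj'
  omega

theorem le_card_filter_div_eq {f : ℕ → ℕ} {r k m : ℕ} (hr : 0 < r) (hk : 0 < k) (hm : 0 < m)
    (hf : MonotoneOn f ↑(Icc 1 (k * r))) (hfn : ∀ t ∈ Icc 1 (k * r), f t ∈ Icc 1 (k * m)) :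
    k ≤ #{i ∈ range (k * r - r + 1) | (f (i + 1) - 1) / m = (f (i + r) - 1) / m} := by
  have hkr : r ≤ k * r := Nat.le_mul_of_pos_left r hk
  have hBmono : MonotoneOn (fun i => (f (i + 1) - 1) / m)
      (Set.Iio (k * r - r + 1 + (r - 1))) := fun i hi j hj hij => by
    simp only [Set.mem_Iio] at hi hj
    exact Nat.div_le_div_right (Nat.sub_le_sub_right (hf (by simp; omega) (by simp; omega)
      (by omega)) 1)
  have hBk : ∀ i < k * r - r + 1 + (r - 1), (f (i + 1) - 1) / m ≤ k - 1 := fun i hi => by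
    have := mem_Icc.1 (hfn (i + 1) (mem_Icc.2 ⟨by omega, by omega⟩))
    have : (f (i + 1) - 1) / m < k := (Nat.div_lt_iff_lt_mul hm).2 (by omega)
    omega
  have hshift : ∀ i, i + (r - 1) + 1 = i + r := fun i => by omega
  have hL : k * r - r + 1 = k + (r - 1) * (k - 1) := by
    obtain ⟨r, rfl⟩ := Nat.exists_eq_add_of_le' hr
    obtain ⟨k, rfl⟩ := Nat.exists_eq_add_of_le' hk
    simp only [Nat.add_sub_cancel]
    ring_nf
    omega
  have := le_card_filter_eq_add_mul hBmono hBk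
  simp only [hshift] at this
  omega

theorem le_card_inter_blockEdges {r k m : ℕ} (hr : 0 < r) (hk : 0 < k) {C : Finset (Finset ℕ)}
    (hC : IsCopy (k * m) (k * r) (pathEdges r (k * r)) C) : k ≤ #(C ∩ blockEdges r k m) := by
  obtain ⟨f, hf, hfn, rfl⟩ := hC
  have hkr : r ≤ k * r := Nat.le_mul_of_pos_left r hk
  have hm : 0 < m := by
    have := mem_Icc.1 (hfn 1 (mem_Icc.2 ⟨le_rfl, by omega⟩))
    exact Nat.pos_of_mul_pos_left (by omega : 0 < k * m)
  refine (le_card_filter_div_eq hr hk hm hf.monotoneOn hfn).trans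
    (card_le_card_of_injOn _ ?_ ((hf.injOn_image_Icc hr hkr).mono fun i hi => ?_))
  · intro i hi
    rw [coe_filter] at hi
    obtain ⟨hi, hblock⟩ := hi
    rw [mem_range] at hi
    have hwindow : Icc (i + 1) (i + r) ⊆ Icc 1 (k * r) := fun x hx => by
      simp only [mem_Icc] at hx ⊢; omega
    refine mem_inter.2 ⟨mem_image.2 ⟨_, mem_image.2 ⟨i + 1, mem_Icc.2 ⟨by omega, by omega⟩,
      by congr 1; omega⟩, rfl⟩, mem_blockEdges_of_forall (q := (f (i + 1) - 1) / m) hm ?_ ?_ ?_⟩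
    · have := mem_Icc.1 (hfn (i + 1) (mem_Icc.2 ⟨by omega, by omega⟩))
      exact (Nat.div_lt_iff_lt_mul hm).2 (by omega)
    · rw [card_image_of_injOn (hf.injOn.mono (coe_subset.2 hwindow)), Nat.card_Icc]
      omega
    · simp only [mem_image]
      rintro _ ⟨t, ht, rfl⟩
      have ht' := mem_Icc.1 ht
      have h₁ : f (i + 1) ≤ f t := hf.monotoneOn (by simp; omega) (by simp; omega) ht'.1
      have h₂ : f t ≤ f (i + r) := hf.monotoneOn (by simp; omega) (by simp; omega) ht'.2
      have h₃ := Nat.div_le_div_right (c := m) (Nat.sub_le_sub_right h₁ 1)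
      have h₄ := Nat.div_le_div_right (c := m) (Nat.sub_le_sub_right h₂ 1)
      exact ⟨(mem_Icc.1 (hfn t (hwindow ht))).1, by omega⟩
  · rw [coe_filter] at hi
    exact mem_range.1 hi.1

theorem isFracTransversal_blockWeight {r k : ℕ} (hr : 0 < r) (hk : 0 < k) (m : ℕ) :
    IsFracTransversal (k * m) r (k * r) (pathEdges r (k * r)) (blockWeight r k m) := by
  refine ⟨fun e _ => by unfold blockWeight; split_ifs <;> positivity, fun C hC => ?_⟩
  rw [sum_blockWeight, one_le_div (by exact_mod_cast hk)]
  exact_mod_cast le_card_inter_blockEdges hr hk hC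

theorem image_Icc_sub_one_mod {i : ℕ} (hi : 1 ≤ i) (r : ℕ) :
    (Icc i (i + r - 1)).image (fun t => (t - 1) % r) = range r := by
  rw [← Nat.image_Ico_mod (i - 1) r]
  ext j
  simp only [mem_image, mem_Icc, mem_Ico]
  constructor
  · rintro ⟨t, ht, rfl⟩
    exact ⟨t - 1, by omega, rfl⟩
  · rintro ⟨u, hu, rfl⟩
    exact ⟨u + 1, by omega, by simp⟩

theorem mul_add_sub_one_mod_add_one {m x : ℕ} (hx : x ∈ Icc 1 m) (q : ℕ) :
    (q * m + x - 1) % m + 1 = x := by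
  rw [mem_Icc] at hx
  rw [show q * m + x - 1 = x - 1 + q * m by omega, Nat.add_mul_mod_self_right,
    Nat.mod_eq_of_lt (by omega)]
  omega

def spreadMap (r m : ℕ) (a : ℕ → ℕ) (t : ℕ) : ℕ := (t - 1) / r * m + a ((t - 1) % r)

section spreadMap

variable {r m : ℕ} {a : ℕ → ℕ}

theorem strictMonoOn_spreadMap (hr : 0 < r) (ha : StrictMonoOn a (Set.Iio r))
    (ham : ∀ j < r, a j ∈ Icc 1 m) : StrictMonoOn (spreadMap r m a) (Set.Ici 1) := by
  intro t ht t' ht' htt'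
  simp only [Set.mem_Ici] at ht ht'
  have hle : (t - 1) / r ≤ (t' - 1) / r := Nat.div_le_div_right (by omega)
  have hdm := Nat.div_add_mod (t - 1) r
  have hdm' := Nat.div_add_mod (t' - 1) r
  have hj := Nat.mod_lt (t - 1) hr
  have hj' := Nat.mod_lt (t' - 1) hr
  unfold spreadMap
  generalize (t - 1) / r = q, (t' - 1) / r = q', (t - 1) % r = j, (t' - 1) % r = j' at *
  rcases hle.lt_or_eq with hq | rfl
  · have h₁ := mem_Icc.1 (ham j hj)
    have h₂ := mem_Icc.1 (ham j' hj')
    nlinarith [Nat.mul_le_mul_right m hq]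
  · exact Nat.add_lt_add_left (ha hj hj' (by omega)) _

theorem spreadMap_mem_Icc (ham : ∀ j < r, a j ∈ Icc 1 m) (hr : 0 < r) {k t : ℕ}
    (ht : t ∈ Icc 1 (k * r)) : spreadMap r m a t ∈ Icc 1 (k * m) := by
  rw [mem_Icc] at ht
  have hq : (t - 1) / r < k := (Nat.div_lt_iff_lt_mul hr).2 (by omega)
  have h := mem_Icc.1 (ham _ (Nat.mod_lt (t - 1) hr))
  rw [spreadMap, mem_Icc]
  constructor
  · omega
  · nlinarith [Nat.mul_le_mul_right m hq]

theorem image_residue_image_spreadMap (hr : 0 < r) (ham : ∀ j < r, a j ∈ Icc 1 m) {i : ℕ}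
    (hi : 1 ≤ i) :
    ((Icc i (i + r - 1)).image (spreadMap r m a)).image (fun x => (x - 1) % m + 1) =
      (range r).image a := by
  rw [image_image, ← image_Icc_sub_one_mod hi, image_image]
  refine image_congr fun t _ => ?_
  exact mul_add_sub_one_mod_add_one (ham _ (Nat.mod_lt _ hr)) _

end spreadMap

theorem Finset.strictMonoOn_nth_mem (A : Finset ℕ) :
    StrictMonoOn (Nat.nth (· ∈ A)) (Set.Iio #A) := by
  have hA : (A.finite_toSet.toFinset) = A := by ext; simp
  simpa [hA] using Nat.nth_strictMonoOn (p := (· ∈ A)) A.finite_toSet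

theorem Finset.image_nth_mem_range (A : Finset ℕ) : (range #A).image (Nat.nth (· ∈ A)) = A := by
  have hA : (A.finite_toSet.toFinset) = A := by ext; simp
  apply coe_injective
  simpa [hA] using Nat.image_nth_Iio_card (p := (· ∈ A)) A.finite_toSet

noncomputable def spreadCopy (r k m : ℕ) (A : Finset ℕ) : Finset (Finset ℕ) :=
  (pathEdges r (k * r)).image fun e => e.image (spreadMap r m (Nat.nth (· ∈ A)))

section spreadCopy

variable {r k m : ℕ} {A : Finset ℕ}

theorem nth_mem_Icc_of_mem_powersetCard (hA : A ∈ (Icc 1 m).powersetCard r) :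
    ∀ j < r, Nat.nth (· ∈ A) j ∈ Icc 1 m := by
  rw [mem_powersetCard] at hA
  intro j hj
  have h := mem_image_of_mem (Nat.nth (· ∈ A)) (mem_range.2 (hA.2 ▸ hj : j < #A))
  rw [A.image_nth_mem_range] at h
  exact hA.1 h

theorem isCopy_spreadCopy (hr : 0 < r) (hA : A ∈ (Icc 1 m).powersetCard r) :
    IsCopy (k * m) (k * r) (pathEdges r (k * r)) (spreadCopy r k m A) := by
  have ha := (mem_powersetCard.1 hA).2 ▸ A.strictMonoOn_nth_mem
  have ham := nth_mem_Icc_of_mem_powersetCard hA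
  refine ⟨spreadMap r m (Nat.nth (· ∈ A)), (strictMonoOn_spreadMap hr ha ham).mono ?_,
    fun t ht => spreadMap_mem_Icc ham hr ht, rfl⟩
  intro t ht
  exact (mem_Icc.1 ht).1

theorem image_residue_of_mem_spreadCopy (hr : 0 < r) (hA : A ∈ (Icc 1 m).powersetCard r)
    {e : Finset ℕ} (he : e ∈ spreadCopy r k m A) : e.image (fun x => (x - 1) % m + 1) = A := by
  simp only [spreadCopy, pathEdges, mem_image] at he
  obtain ⟨_, ⟨i, hi, rfl⟩, rfl⟩ := he
  rw [image_residue_image_spreadMap hr (nth_mem_Icc_of_mem_powersetCard hA) (mem_Icc.1 hi).1,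
    ← (mem_powersetCard.1 hA).2, A.image_nth_mem_range]

theorem spreadCopy_nonempty : (spreadCopy r k m A).Nonempty :=
  (nonempty_Icc.2 (Nat.le_add_left 1 _)).image _ |>.image _

end spreadCopy

theorem exists_isPacking_card_eq_choose {r : ℕ} (hr : 0 < r) (k m : ℕ) :
    ∃ P, IsPacking (k * m) (k * r) (pathEdges r (k * r)) P ∧ #P = m.choose r := by
  have hres : ∀ A ∈ (Icc 1 m).powersetCard r, ∀ e ∈ spreadCopy r k m A,
      e.image (fun x => (x - 1) % m + 1) = A := fun A hA e he =>
    image_residue_of_mem_spreadCopy hr hA he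
  refine ⟨((Icc 1 m).powersetCard r).image (spreadCopy r k m), ⟨?_, ?_⟩, ?_⟩
  · simp only [mem_image]
    rintro _ ⟨A, hA, rfl⟩
    exact isCopy_spreadCopy hr hA
  · simp only [mem_image]
    rintro _ ⟨A, hA, rfl⟩ _ ⟨A', hA', rfl⟩ hne
    exact disjoint_left.2 fun e he he' => hne (by rw [← hres A hA e he, hres A' hA' e he'])
  · rw [card_image_of_injOn, card_powersetCard, Nat.card_Icc, Nat.add_sub_cancel]
    intro A hA A' hA' hAA'
    obtain ⟨e, he⟩ : (spreadCopy r k m A).Nonempty := spreadCopy_nonempty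
    rw [← hres A hA e he, hres A' hA' e (hAA' ▸ he)]

theorem stmt8_general (r s k n : ℕ) (hr : 2 ≤ r) (hrs : r ≤ s) (hdvd : r ∣ s) (hk : k = s / r)
    (hkn : k ∣ n) :
    nu n s (pathEdges r s) = (n / k).choose r ∧
    tauStar n r s (pathEdges r s) = ((n / k).choose r : ℝ) := by
  have hr₀ : 0 < r := by omega
  have hk₀ : 0 < k := hk ▸ Nat.div_pos hrs hr₀
  obtain rfl : s = k * r := by rw [hk, Nat.div_mul_cancel hdvd]
  obtain ⟨m, rfl⟩ := hkn
  obtain ⟨P, hP, hPcard⟩ := exists_isPacking_card_eq_choose hr₀ k m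
  rw [Nat.mul_div_cancel_left m hk₀, ← hPcard]
  refine nu_eq_and_tauStar_eq_of_card_eq_sum (fun C hC => hC.subset_powersetCard_pathEdges hrs) hP
    (isFracTransversal_blockWeight hr₀ hk₀ m) ?_
  rw [hPcard, sum_blockWeight_powersetCard hr₀.ne' hk₀.ne']

/-- If `2 ≤ r ≤ s`, `r ∣ s`, `k = s/r` and `k ∣ n` with `n > 0`, then
`ν(n, P^{(r)}_s) = τ*(n, P^{(r)}_s) = C(n/k, r)`. -/
theorem stmt8 (r s k n : ℕ) (hr : 2 ≤ r) (hrs : r ≤ s) (hdvd : r ∣ s) (hk : k = s / r)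
    (hn : 0 < n) (hkn : k ∣ n) :
    nu n s (pathEdges r s) = (n / k).choose r ∧
    tauStar n r s (pathEdges r s) = ((n / k).choose r : ℝ) :=
  stmt8_general r s k n hr hrs hdvd hk hkn
end

section
/- Let r and s be integers with 2 ≤ r < s such that r−1 divides s−1, let q = (s−1)/(r−1), and let n be a positive integer divisible by q. Partition [n] into q consecutive intervals X_1 < X_2 < … < X_q, each of size n/q, and let G be the subgraph of K^{(r)}_n whose edges are exactly those r-element subsets of [n] not contained in any single part X_i. Then G contains no copy of P^{(r)}_s; consequently ex(n, P^{(r)}_s) ≥ C(n,r) − q·C(n/q, r), where C(a,b) denotes the binomial coefficient. -/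
open Finset
open scoped Classical

/-!
Along a copy `f` of `P^{(r)}_s` with `s = q(r-1) + 1`, the vertices `f(1), f(r), f(2r-1), …, f(s)`
are `q + 1` vertices, any two consecutive ones being the first and last vertex of an edge of
the copy. If every edge meets two parts, the part containing these vertices must strictly
move to the right at each step, which is impossible with only `q` parts. Counting the
`r`-sets inside a single part gives the lower bound on `ex(n, P^{(r)}_s)`.
-/

def crossingEdges (n r q b : ℕ) : Finset (Finset ℕ) :=
  ((Icc 1 n).powersetCard r).filter (fun e => ∀ i ∈ Icc 1 q, ¬ e ⊆ Icc ((i - 1) * b + 1) (i * b))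

lemma Icc_subset_Icc_of_sub_one_div_eq {b x y k : ℕ} (hb : 0 < b) (hx : 1 ≤ x)
    (hxk : (x - 1) / b = k) (hyk : (y - 1) / b = k) : Icc x y ⊆ Icc (k * b + 1) ((k + 1) * b) := by
  intro v hv
  have hlow : (x - 1) / b * b ≤ x - 1 := Nat.div_mul_le_self _ _
  have hhigh : y - 1 < (y - 1) / b * b + b := Nat.lt_div_mul_add hb
  rw [hxk] at hlow
  rw [hyk] at hhigh
  simp only [mem_Icc, add_mul, one_mul] at hv ⊢
  omega

lemma sub_one_div_lt_of_forall_not_subset {b q x y : ℕ} {e : Finset ℕ} (hb : 0 < b)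
    (hx : 1 ≤ x) (hxy : x ≤ y) (hy : y ≤ q * b) (he : e ⊆ Icc x y)
    (hcross : ∀ i ∈ Icc 1 q, ¬ e ⊆ Icc ((i - 1) * b + 1) (i * b)) :
    (x - 1) / b < (y - 1) / b := by
  refine lt_of_le_of_ne (Nat.div_le_div_right (by omega)) fun hdiv => ?_
  have hyq : (y - 1) / b < q := Nat.div_lt_of_lt_mul (by rw [mul_comm]; omega)
  have hin := he.trans (Icc_subset_Icc_of_sub_one_div_eq hb hx rfl hdiv.symm)
  exact hcross ((x - 1) / b + 1) (mem_Icc.2 ⟨le_add_self, by omega⟩)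
    (by rwa [add_tsub_cancel_right])

lemma image_Icc_subset_Icc_of_monotoneOn {f : ℕ → ℕ} {s a c : ℕ}
    (hf : MonotoneOn f (Icc 1 s : Finset ℕ)) (ha : 1 ≤ a) (hc : c ≤ s) :
    (Icc a c).image f ⊆ Icc (f a) (f c) := by
  intro y hy
  obtain ⟨u, hu, rfl⟩ := mem_image.1 hy
  rw [mem_Icc] at hu ⊢
  have hmem : ∀ v, a ≤ v → v ≤ c → v ∈ Icc 1 s := fun v h₁ h₂ ↦ mem_Icc.2 (by omega)
  exact ⟨hf (hmem a le_rfl (hu.1.trans hu.2)) (hmem u hu.1 hu.2) hu.1,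
    hf (hmem u hu.1 hu.2) (hmem c (hu.1.trans hu.2) le_rfl) hu.2⟩

lemma Icc_mem_pathEdges {r s a : ℕ} (hr : 1 ≤ r) (ha : 1 ≤ a) (has : a + r - 1 ≤ s) :
    Icc a (a + r - 1) ∈ pathEdges r s :=
  mem_image_of_mem _ (mem_Icc.2 ⟨ha, by omega⟩)

theorem not_isCopy_subset_crossingEdges {n r s q b : ℕ} {C : Finset (Finset ℕ)}
    (hr : 1 ≤ r) (hs : s = q * (r - 1) + 1) (hb : 0 < b) (hn : n ≤ q * b)
    (hC : IsCopy n s (pathEdges r s) C) : ¬ C ⊆ crossingEdges n r q b := by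
  obtain ⟨f, hf, hrange, rfl⟩ := hC
  intro hsub
  have hmem : ∀ j ≤ q, 1 + j * (r - 1) ∈ Icc 1 s := fun j hj ↦
    mem_Icc.2 ⟨le_add_right le_rfl, by rw [hs]; nlinarith⟩
  have hstep : ∀ j < q, (f (1 + j * (r - 1)) - 1) / b < (f (1 + (j + 1) * (r - 1)) - 1) / b := by
    intro j hj
    have hend : 1 + j * (r - 1) + r - 1 = 1 + (j + 1) * (r - 1) := by rw [add_mul]; omega
    have hedge := hsub (mem_image_of_mem _ (Icc_mem_pathEdges (a := 1 + j * (r - 1)) hr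
      (Nat.le_add_right 1 _) (hend ▸ (mem_Icc.1 (hmem (j + 1) hj)).2)))
    rw [crossingEdges, mem_filter, hend] at hedge
    have hlo := mem_Icc.1 (hrange _ (hmem j hj.le))
    have hhi := mem_Icc.1 (hrange _ (hmem (j + 1) hj))
    refine sub_one_div_lt_of_forall_not_subset hb hlo.1
      (hf.monotoneOn (hmem j hj.le) (hmem (j + 1) hj) (by gcongr; omega)) (hhi.2.trans hn)
      (image_Icc_subset_Icc_of_monotoneOn hf.monotoneOn (Nat.le_add_right 1 _)
        (mem_Icc.1 (hmem (j + 1) hj)).2) hedge.2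
  have hclimb : ∀ j ≤ q, j ≤ (f (1 + j * (r - 1)) - 1) / b := by
    intro j
    induction j with
    | zero => exact fun _ ↦ Nat.zero_le _
    | succ j ih => exact fun hj ↦ (ih (by omega)).trans_lt (hstep j hj)
  have hlast := mem_Icc.1 (hrange _ (hmem q le_rfl))
  have hlast_lt : (f (1 + q * (r - 1)) - 1) / b < q :=
    Nat.div_lt_of_lt_mul (by rw [mul_comm b q]; omega)
  exact absurd (hclimb q le_rfl) hlast_lt.not_ge

lemma card_powersetCard_Icc_mul {b i : ℕ} (r : ℕ) (hi : 1 ≤ i) :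
    ((Icc ((i - 1) * b + 1) (i * b)).powersetCard r).card = b.choose r := by
  obtain ⟨i, rfl⟩ := Nat.exists_eq_add_of_le' hi
  rw [card_powersetCard, Nat.card_Icc, add_tsub_cancel_right, add_mul, one_mul]
  congr 1
  omega

lemma choose_sub_le_card_crossingEdges (n r q b : ℕ) :
    n.choose r - q * b.choose r ≤ (crossingEdges n r q b).card := by
  have hcover : ((Icc 1 n).powersetCard r).filter
        (fun e => ¬ ∀ i ∈ Icc 1 q, ¬ e ⊆ Icc ((i - 1) * b + 1) (i * b))
      ⊆ (Icc 1 q).biUnion (fun i => (Icc ((i - 1) * b + 1) (i * b)).powersetCard r) := by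
    intro e he
    simp only [mem_filter, mem_powersetCard, not_forall, not_not] at he
    obtain ⟨⟨-, hcard⟩, i, hi, hsub⟩ := he
    exact mem_biUnion.2 ⟨i, hi, mem_powersetCard.2 ⟨hsub, hcard⟩⟩
  have hinside := (card_le_card hcover).trans (card_biUnion_le_card_mul _ _ _
    fun i hi ↦ (card_powersetCard_Icc_mul r (mem_Icc.1 hi).1).le)
  have hsplit := card_filter_add_card_filter_not (s := (Icc 1 n).powersetCard r)
    (p := fun e => ∀ i ∈ Icc 1 q, ¬ e ⊆ Icc ((i - 1) * b + 1) (i * b))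
  rw [Nat.card_Icc, add_tsub_cancel_right] at hinside
  rw [card_powersetCard, Nat.card_Icc, add_tsub_cancel_right] at hsplit
  rw [crossingEdges]
  omega

lemma card_le_exNum {n r s : ℕ} {E G : Finset (Finset ℕ)} (hG : G ⊆ (Icc 1 n).powersetCard r)
    (hfree : ∀ C, IsCopy n s E C → ¬ C ⊆ G) : G.card ≤ exNum n r s E :=
  le_csSup ⟨n.choose r, by
      rintro m ⟨G', hG', -, rfl⟩
      simpa using card_le_card hG'⟩
    ⟨G, hG, hfree, rfl⟩

/-- If `2 ≤ r < s`, `(r-1) ∣ (s-1)`, `q = (s-1)/(r-1)` and `q ∣ n` with `n > 0`,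
then the subgraph of `K^{(r)}_n` whose edges are the `r`-sets not contained in any of the `q`
consecutive intervals of length `n/q` contains no copy of `P^{(r)}_s`; consequently
`ex(n, P^{(r)}_s) ≥ C(n,r) - q·C(n/q, r)`. -/
theorem stmt9 (r s q n : ℕ) (hr : 2 ≤ r) (hrs : r < s) (hdvd : (r - 1) ∣ (s - 1))
    (hq : q = (s - 1) / (r - 1)) (hn : 0 < n) (hqn : q ∣ n) :
    (∀ C : Finset (Finset ℕ), IsCopy n s (pathEdges r s) C →
      ¬ C ⊆ ((Finset.Icc 1 n).powersetCard r).filter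
        (fun e => ∀ i ∈ Finset.Icc 1 q, ¬ e ⊆ Finset.Icc ((i - 1) * (n / q) + 1) (i * (n / q)))) ∧
    n.choose r - q * (n / q).choose r ≤ exNum n r s (pathEdges r s) := by
  have hs : s = q * (r - 1) + 1 := by rw [hq, Nat.div_mul_cancel hdvd]; omega
  have hnq : n = q * (n / q) := (Nat.mul_div_cancel' hqn).symm
  have hb : 0 < n / q := Nat.pos_of_ne_zero fun h ↦ by rw [h, mul_zero] at hnq; omega
  have hfree : ∀ C, IsCopy n s (pathEdges r s) C → ¬ C ⊆ crossingEdges n r q (n / q) :=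
    fun C hC ↦ not_isCopy_subset_crossingEdges (by omega) hs hb hnq.le hC
  exact ⟨hfree, (choose_sub_le_card_crossingEdges n r q (n / q)).trans
    (card_le_exNum (filter_subset _ _) hfree)⟩
end

section
/- Let k be an odd positive integer. Then liminf_{n→∞} f(n,k)/C(n,3) ≥ 1 − 4/(k+1)^2, where C(n,3) is the binomial coefficient. -/
/-! Write `k = 2t - 1` and cut `[n]` into `t` consecutive blocks of length `b = ⌊n/t⌋ + 1`.
Labelling an edge between blocks `i ≤ j` (numbered from `0`) by `i + j + 1` uses only the labels
`1, …, 2t - 1`, and a triple `u < v < w` is bad only if `u` and `w` lie in the same block, because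
`φ(uv) ≥ φ(vw)` forces the block of `u` to be at least that of `w`. So at most `t · C(b, 3)`, about
`C(n, 3) / t²`, triples are bad, and `1 - 1/t² = 1 - 4/(k + 1)²`. -/

open Finset
open scoped Classical

open Filter Topology

section IncreasingTuples

variable {α : Type*} [LinearOrder α]

def incPairs (s : Finset α) : Finset (α × α) := (s ×ˢ s).filter fun p => p.1 < p.2

def incTriples (s : Finset α) : Finset (α × α × α) :=
  (s ×ˢ s ×ˢ s).filter fun p => p.1 < p.2.1 ∧ p.2.1 < p.2.2

lemma incPairs_insert_of_forall_lt {a : α} {s : Finset α} (ha : ∀ x ∈ s, x < a) :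
    incPairs (insert a s) = incPairs s ∪ s.image (·, a) := by
  ext ⟨u, v⟩
  simp only [incPairs, mem_filter, mem_product, mem_insert, mem_union, mem_image, Prod.mk.injEq]
  constructor
  · rintro ⟨⟨rfl | hu, rfl | hv⟩, huv⟩
    · exact absurd huv (lt_irrefl _)
    · exact absurd huv (ha v hv).asymm
    · exact Or.inr ⟨u, hu, rfl, rfl⟩
    · exact Or.inl ⟨⟨hu, hv⟩, huv⟩
  · rintro (⟨⟨hu, hv⟩, huv⟩ | ⟨x, hx, rfl, rfl⟩)
    · exact ⟨⟨Or.inr hu, Or.inr hv⟩, huv⟩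
    · exact ⟨⟨Or.inr hx, Or.inl rfl⟩, ha x hx⟩

lemma card_incPairs (s : Finset α) : #(incPairs s) = (#s).choose 2 := by
  induction s using induction_on_max with
  | empty => rfl
  | insert a s ha ih =>
    have has : a ∉ s := fun h => lt_irrefl a (ha a h)
    rw [incPairs_insert_of_forall_lt ha, card_union_of_disjoint, ih,
      card_image_of_injective _ (Prod.mk_left_injective a), card_insert_of_notMem has,
      Nat.choose_succ_succ', Nat.choose_one_right, add_comm]
    refine disjoint_left.2 fun p hp hp' => ?_
    obtain ⟨x, -, rfl⟩ := mem_image.1 hp'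
    exact has (mem_product.1 (mem_filter.1 hp).1).2

lemma incTriples_insert_of_forall_lt {a : α} {s : Finset α} (ha : ∀ x ∈ s, x < a) :
    incTriples (insert a s) = incTriples s ∪ (incPairs s).image fun p => (p.1, p.2, a) := by
  ext ⟨u, v, w⟩
  simp only [incTriples, incPairs, mem_filter, mem_product, mem_insert,
    mem_union, mem_image, Prod.exists, Prod.mk.injEq]
  constructor
  · rintro ⟨⟨rfl | hu, rfl | hv, rfl | hw⟩, huv, hvw⟩
    all_goals first
      | exact absurd huv (lt_irrefl _)
      | exact absurd hvw (lt_irrefl _)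
      | exact absurd huv (ha _ ‹_›).asymm
      | exact absurd hvw (ha _ ‹_›).asymm
      | exact Or.inr ⟨u, v, ⟨⟨hu, hv⟩, huv⟩, rfl, rfl, rfl⟩
      | exact Or.inl ⟨⟨hu, hv, hw⟩, huv, hvw⟩
  · rintro (⟨⟨hu, hv, hw⟩, huv, hvw⟩ | ⟨x, y, ⟨⟨hx, hy⟩, hxy⟩, rfl, rfl, rfl⟩)
    · exact ⟨⟨Or.inr hu, Or.inr hv, Or.inr hw⟩, huv, hvw⟩
    · exact ⟨⟨Or.inr hx, Or.inr hy, Or.inl rfl⟩, hxy, ha y hy⟩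

lemma card_incTriples (s : Finset α) : #(incTriples s) = (#s).choose 3 := by
  induction s using induction_on_max with
  | empty => rfl
  | insert a s ha ih =>
    have has : a ∉ s := fun h => lt_irrefl a (ha a h)
    have hinj : Function.Injective fun p : α × α => (p.1, p.2, a) := fun p q h => by
      simp only [Prod.mk.injEq] at h
      exact Prod.ext h.1 h.2.1
    rw [incTriples_insert_of_forall_lt ha, card_union_of_disjoint, ih,
      card_image_of_injective _ hinj, card_incPairs, card_insert_of_notMem has,
      Nat.choose_succ_succ' _ 2, add_comm]
    refine disjoint_left.2 fun p hp hp' => ?_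
    obtain ⟨q, -, rfl⟩ := mem_image.1 hp'
    exact has (mem_product.1 (mem_product.1 (mem_filter.1 hp).1).2).2

end IncreasingTuples

lemma goodCount_add_badCount (n : ℕ) (φ : ℕ → ℕ → ℕ) :
    goodCount n φ + badCount n φ = n.choose 3 := by
  have hsplit := card_filter_add_card_filter_not (s := incTriples (Icc 1 n))
    fun p => φ p.1 p.2.1 < φ p.2.1 p.2.2
  simp only [incTriples, filter_filter, and_assoc] at hsplit
  rw [goodCount, badCount, hsplit, ← incTriples, card_incTriples, Nat.card_Icc,
    Nat.add_sub_cancel]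

lemma goodCount_le_fmax {n k : ℕ} {φ : ℕ → ℕ → ℕ} (hφ : IsLabeling n k φ) :
    goodCount n φ ≤ fmax n k :=
  le_csSup ⟨n.choose 3, by
    rintro m ⟨ψ, -, rfl⟩
    exact Nat.le.intro (goodCount_add_badCount n ψ)⟩ ⟨φ, hφ, rfl⟩

lemma fmax_le_choose (n k : ℕ) : fmax n k ≤ n.choose 3 :=
  csSup_le' <| by
    rintro m ⟨φ, -, rfl⟩
    exact Nat.le.intro (goodCount_add_badCount n φ)

def blockLabeling (b u v : ℕ) : ℕ := u / b + v / b + 1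

lemma isLabeling_blockLabeling {n t : ℕ} (ht : 0 < t) :
    IsLabeling n (2 * t - 1) (blockLabeling (n / t + 1)) := by
  intro u v hu hv _
  have hlt : ∀ x ∈ Icc 1 n, x / (n / t + 1) < t := fun x hx =>
    (Nat.div_lt_iff_lt_mul (Nat.succ_pos _)).2 <|
      (mem_Icc.1 hx).2.trans_lt (Nat.lt_mul_div_succ n ht)
  have := hlt u hu
  have := hlt v hv
  simp only [blockLabeling, mem_Icc]
  exact ⟨Nat.le_add_left _ _, by omega⟩

lemma badCount_blockLabeling_le {n b t : ℕ} (h : n < t * b) :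
    badCount n (blockLabeling b) ≤ t * b.choose 3 := by
  have hb : 0 < b := Nat.pos_of_ne_zero fun hb => by simp [hb] at h
  have hblock : ∀ x j, x / b = j → x ∈ Ico (j * b) (j * b + b) := by
    rintro x _ rfl
    exact mem_Ico.2 ⟨Nat.div_mul_le_self x b, Nat.lt_div_mul_add hb⟩
  have hsub : ((Icc 1 n ×ˢ Icc 1 n ×ˢ Icc 1 n).filter fun p => p.1 < p.2.1 ∧ p.2.1 < p.2.2 ∧
      ¬blockLabeling b p.1 p.2.1 < blockLabeling b p.2.1 p.2.2) ⊆
      (range t).biUnion fun j => incTriples (Ico (j * b) (j * b + b)) := by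
    refine subset_iff.2 fun ⟨u, v, w⟩ hp => ?_
    rw [mem_filter] at hp
    simp only [mem_product, mem_Icc, blockLabeling] at hp
    obtain ⟨⟨⟨-, hun⟩, -, -⟩, huv, hvw, hbad⟩ := hp
    have := Nat.div_le_div_right (c := b) huv.le
    have := Nat.div_le_div_right (c := b) hvw.le
    refine mem_biUnion.2 ⟨u / b, mem_range.2 ((Nat.div_lt_iff_lt_mul hb).2 (by omega)), ?_⟩
    simp only [incTriples, mem_filter, mem_product]
    exact ⟨⟨hblock u _ rfl, hblock v _ (by omega), hblock w _ (by omega)⟩, huv, hvw⟩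
  calc badCount n (blockLabeling b)
      ≤ #((range t).biUnion fun j => incTriples (Ico (j * b) (j * b + b))) := card_le_card hsub
    _ ≤ ∑ j ∈ range t, #(incTriples (Ico (j * b) (j * b + b))) := card_biUnion_le
    _ = t * b.choose 3 := by
      simp only [card_incTriples, Nat.card_Ico, Nat.add_sub_cancel_left, sum_const, card_range,
        smul_eq_mul]

lemma choose_three_le_fmax_add {n t : ℕ} (ht : 0 < t) :
    n.choose 3 ≤ fmax n (2 * t - 1) + t * (n / t + 1).choose 3 := by
  rw [← goodCount_add_badCount n (blockLabeling (n / t + 1))]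
  exact add_le_add (goodCount_le_fmax (isLabeling_blockLabeling ht))
    (badCount_blockLabeling_le (Nat.lt_mul_div_succ n ht))

lemma one_sub_le_fmax_div_choose {n t : ℕ} (ht : 0 < t) (hn : 3 ≤ n) :
    1 - (((n : ℝ) + t) / (n - 2)) ^ 3 / (t : ℝ) ^ 2 ≤ fmax n (2 * t - 1) / n.choose 3 := by
  have ht' : (0 : ℝ) < t := by exact_mod_cast ht
  have hn2 : (0 : ℝ) < n - 2 := by
    have : (3 : ℝ) ≤ n := by exact_mod_cast hn
    linarith
  have hA : ((n : ℝ) - 2) ^ 3 / 6 ≤ n.choose 3 := by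
    have h := Nat.pow_le_choose (α := ℝ) 3 n
    have e : ((n + 1 - 3 : ℕ) : ℝ) = n - 2 := by
      rw [Nat.cast_sub (by omega)]
      push_cast
      ring
    rw [e] at h
    exact le_of_eq_of_le (by norm_num [Nat.factorial]) h
  have hB : ((n / t + 1).choose 3 : ℝ) ≤ (((n : ℝ) + t) / t) ^ 3 / 6 := by
    have hb : ((n / t + 1 : ℕ) : ℝ) ≤ ((n : ℝ) + t) / t := by
      rw [Nat.cast_add_one, add_div, div_self ht'.ne']
      exact add_le_add_left Nat.cast_div_le 1
    calc ((n / t + 1).choose 3 : ℝ) ≤ ((n / t + 1 : ℕ) : ℝ) ^ 3 / 6 := Nat.choose_le_pow_div 3 _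
      _ ≤ (((n : ℝ) + t) / t) ^ 3 / 6 := by gcongr
  have hfmax : (n.choose 3 : ℝ) ≤ fmax n (2 * t - 1) + t * (n / t + 1).choose 3 := by
    exact_mod_cast choose_three_le_fmax_add ht
  have hA0 : (0 : ℝ) < n.choose 3 := by exact_mod_cast Nat.choose_pos hn
  have hbad : (t : ℝ) * (n / t + 1).choose 3 ≤
      (((n : ℝ) + t) / (n - 2)) ^ 3 / (t : ℝ) ^ 2 * n.choose 3 :=
    calc (t : ℝ) * (n / t + 1).choose 3 ≤ t * ((((n : ℝ) + t) / t) ^ 3 / 6) := by gcongr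
      _ = (((n : ℝ) + t) / (n - 2)) ^ 3 / (t : ℝ) ^ 2 * (((n : ℝ) - 2) ^ 3 / 6) := by
        field_simp
      _ ≤ (((n : ℝ) + t) / (n - 2)) ^ 3 / (t : ℝ) ^ 2 * n.choose 3 := by gcongr
  rw [le_div_iff₀ hA0]
  linarith

lemma tendsto_add_div_sub_two (t : ℝ) :
    Tendsto (fun n : ℕ => ((n : ℝ) + t) / (n - 2)) atTop (𝓝 1) := by
  simpa only [one_mul, div_one, add_comm t, neg_add_eq_sub] using
    tendsto_add_mul_div_add_mul_atTop_nhds t (-2) 1 one_ne_zero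

theorem stmt11_general (k : ℕ) (hk : Odd k) :
    (1 - 4 / ((k : ℝ) + 1) ^ 2) ≤
      Filter.atTop.liminf (fun n : ℕ => (fmax n k : ℝ) / (n.choose 3 : ℝ)) := by
  obtain ⟨a, rfl⟩ := hk
  have hlabels : 2 * a + 1 = 2 * (a + 1) - 1 := by omega
  have hlower : ∀ᶠ n : ℕ in atTop,
      1 - (((n : ℝ) + (a + 1 : ℕ)) / (n - 2)) ^ 3 / ((a + 1 : ℕ) : ℝ) ^ 2 ≤
        fmax n (2 * a + 1) / n.choose 3 :=
    eventually_atTop.2 ⟨3, fun n hn => hlabels ▸ one_sub_le_fmax_div_choose (Nat.succ_pos a) hn⟩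
  have hlim := (((tendsto_add_div_sub_two ((a + 1 : ℕ) : ℝ)).pow 3).div_const
    (((a + 1 : ℕ) : ℝ) ^ 2)).const_sub 1
  have hbdd : IsCoboundedUnder (· ≥ ·) atTop fun n : ℕ => (fmax n (2 * a + 1) : ℝ) / n.choose 3 :=
    isCoboundedUnder_ge_of_le _ (x := 1) fun n =>
      div_le_one_of_le₀ (by exact_mod_cast fmax_le_choose n _) (Nat.cast_nonneg _)
  have hL : 1 - 4 / (((2 * a + 1 : ℕ) : ℝ) + 1) ^ 2 = 1 - 1 ^ 3 / ((a + 1 : ℕ) : ℝ) ^ 2 := by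
    push_cast
    field_simp
    ring
  rw [hL, ← hlim.liminf_eq]
  exact liminf_le_liminf hlower hlim.isBoundedUnder_ge hbdd

/-- For odd positive `k`,
`liminf_{n→∞} f(n,k)/C(n,3) ≥ 1 - 4/(k+1)^2`. -/
theorem stmt11 (k : ℕ) (hk : Odd k) (hk0 : 0 < k) :
    (1 - 4 / ((k : ℝ) + 1) ^ 2) ≤
      Filter.atTop.liminf (fun n : ℕ => (fmax n k : ℝ) / (n.choose 3 : ℝ)) :=
  stmt11_general k hk
end
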